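/- Let a < t₁ < t₂ < ⋯ < t_r < b be real numbers and ℓ ≥ 0 an integer. For 1 ≤ i ≤ r and 0 ≤ k ≤ ℓ define P_{ik}(t) := c_{ik} (t − t_i)^k ∏_{j≠i} ((t − t_i)^{ℓ+1} − (t_j − t_i)^{ℓ+1})^{ℓ+1}, with c_{ik} := (1/k!) · (−1)^{(ℓ+1)(r−1)} / ∏_{j≠i} (t_j − t_i)^{(ℓ+1)²}. Then the m-th derivative satisfies P_{ik}^{(m)}(t_j) = 1 if i = j and k = m, and P_{ik}^{(m)}(t_j) = 0 otherwise, for all 1 ≤ j ≤ r and 0 ≤ m ≤ ℓ. -/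

import Mathlib

/-!
Write `u = tᵢ` and `n = ℓ + 1`. The product `Gᵢ = ∏_{j ≠ i} ((X - u)ⁿ - (tⱼ - u)ⁿ)ⁿ` is a polynomial
in `(X - u)ⁿ`, so it is congruent to its value `(-1)^{n(r-1)} ∏_{j ≠ i} (tⱼ - u)^{n²}` modulo
`(X - u)ⁿ`, and `cᵢₖ` is exactly the normalisation making `cᵢₖ Gᵢ ≡ 1 / k!`. Derivatives of
order `< n` at `u` only see a polynomial modulo `(X - u)ⁿ`, so at `u` the derivatives of `Pᵢₖ` are
those of `(X - u)ᵏ / k!`. At any other node `tⱼ` the factor `(X - tⱼ)ⁿ` divides `Pᵢₖ`.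
-/

open Polynomial Finset

namespace Polynomial

theorem iteratedDeriv_eval {𝕜 : Type*} [NontriviallyNormedField 𝕜] (p : 𝕜[X]) (m : ℕ) :
    iteratedDeriv m (fun x => p.eval x) = fun x => (derivative^[m] p).eval x := by
  induction m with
  | zero => simp
  | succ m ih =>
    rw [iteratedDeriv_succ, ih, Function.iterate_succ_apply']
    funext x
    exact Polynomial.deriv _

variable {R : Type*} [CommRing R]

theorem eval_iterate_derivative_eq_zero_of_pow_dvd {p : R[X]} {s : R} {n m : ℕ}
    (h : (X - C s) ^ n ∣ p) (hm : m < n) : (derivative^[m] p).eval s = 0 :=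
  dvd_iff_isRoot.mp <| (dvd_pow_self _ (Nat.sub_ne_zero_of_lt hm)).trans
    (pow_sub_dvd_iterate_derivative_of_pow_dvd m h)

theorem eval_iterate_derivative_eq_of_pow_dvd_sub {p q : R[X]} {s : R} {n m : ℕ}
    (h : (X - C s) ^ n ∣ p - q) (hm : m < n) :
    (derivative^[m] p).eval s = (derivative^[m] q).eval s := by
  rw [← sub_eq_zero, ← eval_sub, ← iterate_derivative_sub]
  exact eval_iterate_derivative_eq_zero_of_pow_dvd h hm

theorem eval_iterate_derivative_X_sub_C_pow_self (k m : ℕ) (s : R) :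
    (derivative^[m] ((X - C s) ^ k)).eval s = if k = m then (k.factorial : R) else 0 := by
  rw [iterate_derivative_X_sub_pow, eval_smul, eval_pow, eval_sub, eval_X, eval_C, sub_self]
  rcases lt_trichotomy k m with hkm | rfl | hkm
  · simp [hkm.ne, Nat.descFactorial_eq_zero_iff_lt.mpr hkm]
  · simp [Nat.descFactorial_self]
  · simp [hkm.ne', Nat.sub_ne_zero_of_lt hkm]

theorem dvd_comp_sub_C_eval_zero (q h : R[X]) : h ∣ q.comp h - C (q.eval 0) := by
  have hX : X ∣ q - C (q.eval 0) := coeff_zero_eq_eval_zero q ▸ X_dvd_sub_C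
  simpa using (compRingHom h).map_dvd hX

theorem eval_iterate_derivative_C_mul_X_sub_C_pow_mul {G : R[X]} {s g : R} {n m : ℕ}
    (hG : (X - C s) ^ n ∣ G - C g) (hm : m < n) (c : R) (k : ℕ) :
    (derivative^[m] (C c * (X - C s) ^ k * G)).eval s =
      if k = m then c * g * k.factorial else 0 := by
  have hsub : (X - C s) ^ n ∣ C c * (X - C s) ^ k * G - C (c * g) * (X - C s) ^ k := by
    have : C c * (X - C s) ^ k * G - C (c * g) * (X - C s) ^ k =
        C c * (X - C s) ^ k * (G - C g) := by
      rw [C_mul]; ring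
    exact this ▸ dvd_mul_of_dvd_right hG _
  rw [eval_iterate_derivative_eq_of_pow_dvd_sub hsub hm, iterate_derivative_C_mul, eval_mul,
    eval_C, eval_iterate_derivative_X_sub_C_pow_self]
  split_ifs <;> ring

noncomputable def hermiteProd {ι : Type*} (s : Finset ι) (t : ι → R) (u : R) (n : ℕ) : R[X] :=
  ∏ j ∈ s, ((X - C u) ^ n - C ((t j - u) ^ n)) ^ n

section hermiteProd

variable {ι : Type*} (s : Finset ι) (t : ι → R) (u : R) (n : ℕ)

theorem eval_hermiteProd (x : R) :
    (hermiteProd s t u n).eval x = ∏ j ∈ s, ((x - u) ^ n - (t j - u) ^ n) ^ n := by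
  simp [hermiteProd, eval_prod]

theorem pow_dvd_hermiteProd_sub :
    (X - C u) ^ n ∣ hermiteProd s t u n - C ((-1) ^ (n * #s) * ∏ j ∈ s, (t j - u) ^ (n ^ 2)) := by
  have hcomp : hermiteProd s t u n =
      (∏ j ∈ s, (X - C ((t j - u) ^ n)) ^ n).comp ((X - C u) ^ n) := by
    simp [hermiteProd, prod_comp]
  have heval : (∏ j ∈ s, (X - C ((t j - u) ^ n)) ^ n).eval 0 =
      (-1) ^ (n * #s) * ∏ j ∈ s, (t j - u) ^ (n ^ 2) := by
    rw [pow_mul, ← prod_const, ← prod_mul_distrib, eval_prod]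
    refine prod_congr rfl fun j _ => ?_
    rw [eval_pow, eval_sub, eval_X, eval_C, zero_sub, neg_pow, sq, pow_mul]
  rw [hcomp, ← heval]
  exact dvd_comp_sub_C_eval_zero _ _

theorem pow_X_sub_C_dvd_hermiteProd {j : ι} (hj : j ∈ s) :
    (X - C (t j)) ^ n ∣ hermiteProd s t u n := by
  have hroot : X - C (t j) ∣ (X - C u) ^ n - C ((t j - u) ^ n) := by
    simp [dvd_iff_isRoot]
  exact (pow_dvd_pow_of_dvd hroot n).trans (dvd_prod_of_mem _ hj)

end hermiteProd

end Polynomial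

theorem hermite_interpolation_basis_general (r : ℕ)
    (t : Fin r → ℝ) (hmono : StrictMono t)
    (ℓ : ℕ) (i : Fin r) (k : ℕ) (j : Fin r) (m : ℕ) (hm : m ≤ ℓ) :
    iteratedDeriv m
        (fun x : ℝ =>
          (1 / (k.factorial : ℝ) *
              ((-1 : ℝ) ^ ((ℓ + 1) * (r - 1)) /
                ∏ j' ∈ Finset.univ.erase i, (t j' - t i) ^ ((ℓ + 1) ^ 2))) *
            (x - t i) ^ k *
            ∏ j' ∈ Finset.univ.erase i,
              ((x - t i) ^ (ℓ + 1) - (t j' - t i) ^ (ℓ + 1)) ^ (ℓ + 1))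
        (t j) = if i = j ∧ k = m then 1 else 0 := by
  set c := 1 / (k.factorial : ℝ) *
    ((-1) ^ ((ℓ + 1) * (r - 1)) / ∏ j' ∈ univ.erase i, (t j' - t i) ^ ((ℓ + 1) ^ 2))
  have hP : (fun x => c * (x - t i) ^ k * ∏ j' ∈ univ.erase i,
      ((x - t i) ^ (ℓ + 1) - (t j' - t i) ^ (ℓ + 1)) ^ (ℓ + 1)) =
      fun x => (C c * (X - C (t i)) ^ k * hermiteProd (univ.erase i) t (t i) (ℓ + 1)).eval x := by
    simp [eval_hermiteProd]
  simp only [hP, iteratedDeriv_eval]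
  by_cases hij : i = j
  · subst hij
    have hD : ∏ j' ∈ univ.erase i, (t j' - t i) ^ ((ℓ + 1) ^ 2) ≠ 0 :=
      prod_ne_zero_iff.mpr fun j' hj' =>
        pow_ne_zero _ (sub_ne_zero.mpr (hmono.injective.ne (ne_of_mem_erase hj')))
    have hcard : #(univ.erase i) = r - 1 := by simp
    rw [eval_iterate_derivative_C_mul_X_sub_C_pow_mul (pow_dvd_hermiteProd_sub _ t _ _)
      (Nat.lt_add_one_iff.mpr hm), hcard]
    by_cases hkm : k = m
    · rw [if_pos hkm, if_pos ⟨rfl, hkm⟩]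
      simp only [c]
      field_simp
      rw [← pow_mul, pow_mul', neg_one_sq, one_pow]
    · rw [if_neg hkm, if_neg (by tauto)]
  · have hdvd := dvd_mul_of_dvd_right
      (pow_X_sub_C_dvd_hermiteProd _ t (t i) (ℓ + 1) (mem_erase.mpr ⟨Ne.symm hij, mem_univ j⟩))
      (C c * (X - C (t i)) ^ k)
    rw [eval_iterate_derivative_eq_zero_of_pow_dvd hdvd (Nat.lt_add_one_iff.mpr hm),
      if_neg (by tauto)]

theorem hermite_interpolation_basis (r : ℕ) (hr : 1 ≤ r) (a b : ℝ)
    (t : Fin r → ℝ) (hmono : StrictMono t) (hab : ∀ i, t i ∈ Set.Ioo a b)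
    (ℓ : ℕ) (i : Fin r) (k : ℕ) (hk : k ≤ ℓ) (j : Fin r) (m : ℕ) (hm : m ≤ ℓ) :
    iteratedDeriv m
        (fun x : ℝ =>
          (1 / (k.factorial : ℝ) *
              ((-1 : ℝ) ^ ((ℓ + 1) * (r - 1)) /
                ∏ j' ∈ Finset.univ.erase i, (t j' - t i) ^ ((ℓ + 1) ^ 2))) *
            (x - t i) ^ k *
            ∏ j' ∈ Finset.univ.erase i,
              ((x - t i) ^ (ℓ + 1) - (t j' - t i) ^ (ℓ + 1)) ^ (ℓ + 1))
        (t j) = if i = j ∧ k = m then 1 else 0 :=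
  hermite_interpolation_basis_general r t hmono ℓ i k j m hm
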